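/- Fix ε ∈ (0,1), N ≥ 1, R ∈ ℕ, and t ∈ [2R+ε, 2(R+1)−ε]. Assume moreover that m/t ∉ ℤ for every integer m with 1 ≤ m ≤ N−1. Then P_N(t) = det M, where M is the N×N matrix with diagonal entries M_{i,i} = (2R+1)ε/t and off-diagonal entries M_{i,j} = sin((j−i)(2R+1)π/t) · sin((j−i)πε/t) / ( π(j−i) · sin((j−i)π/t) ) for i ≠ j. -/

import Mathlib

open MeasureTheory Real

/-- The squared modulus of the Vandermonde determinant of the points `e^{iθ_k}`:
`Δ(θ) = ∏_{1 ≤ i < j ≤ N} |e^{iθ_i} − e^{iθ_j}|²`. -/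
noncomputable def vdm2 {N : ℕ} (θ : Fin N → ℝ) : ℝ :=
  ∏ i : Fin N, ∏ j ∈ Finset.Ioi i,
    ‖Complex.exp ((θ i : ℂ) * Complex.I) - Complex.exp ((θ j : ℂ) * Complex.I)‖ ^ 2

/-- The set `Ĩ(t) = {θ ∈ [−π,π] : ∃ m ∈ ℤ, |tθ − 2πm| ≤ πε}` of initial angles whose
time-`t` evolution `e^{itθ}` lies in the arc `{e^{is} : |s| ≤ πε}`. -/
def Itil (ε t : ℝ) : Set ℝ :=
  {θ : ℝ | θ ∈ Set.Icc (-π) π ∧ ∃ m : ℤ, |t * θ - 2 * π * m| ≤ π * ε}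

/-- The strong return probability
`P_N(t) = ((2π)^N N!)⁻¹ ∫_{Ĩ(t)^N} ∏_{i<j} |e^{iθ_i} − e^{iθ_j}|² dθ`. -/
noncomputable def Pstrong (ε : ℝ) (N : ℕ) (t : ℝ) : ℝ :=
  ((2 * π) ^ N * (Nat.factorial N : ℝ))⁻¹ *
    ∫ θ in Set.univ.pi (fun _ : Fin N => Itil ε t), vdm2 θ

/-!
Since `Δ(θ) = |det (e^{i j θ_k})|²`, Andréief's identity turns the `N`-fold integral over
`Ĩ(t)^N` into `N!` times the Toeplitz determinant of the Fourier coefficients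
`∫_{Ĩ(t)} e^{i(l-k)θ} dθ`. Up to the null set `{±π}`, `Ĩ(t)` is the disjoint union of the
`2R+1` arcs of half-width `πε/t` centred at `2πm/t`, `|m| ≤ R`; its Fourier coefficient at
`a ≠ 0` is the transform `2 sin(aπε/t)/a` of one arc times the Dirichlet kernel
`sin((2R+1)aπ/t)/sin(aπ/t)`, and the non-resonance hypothesis keeps that denominator nonzero.
-/

open Equiv Matrix Metric
open Complex (I)
open scoped Nat Complex

namespace Matrix

variable {n R : Type*} [Fintype n] [DecidableEq n] [CommRing R]

theorem sum_perm_sum_perm_sign_mul_sign_mul_prod (A : Matrix n n R) :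
    ∑ σ : Perm n, ∑ τ : Perm n, ((Perm.sign σ : ℤ) : R) * (Perm.sign τ : ℤ) * ∏ i, A (σ i) (τ i) =
      (Fintype.card n)! * A.det := by
  have inner (τ : Perm n) :
      ∑ σ : Perm n, ((Perm.sign σ : ℤ) : R) * (Perm.sign τ : ℤ) * ∏ i, A (σ i) (τ i) =
        A.det := by
    rw [det_apply']
    refine Fintype.sum_equiv (Equiv.mulRight τ⁻¹) _ _ fun σ => ?_
    rw [coe_mulRight, ← Equiv.prod_comp τ (fun j => A ((σ * τ⁻¹) j) j)]
    simp [Perm.sign_mul, Perm.sign_inv, mul_assoc]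
  rw [Finset.sum_comm]
  simp [inner, Fintype.card_perm]

end Matrix

section Andreief

variable {ι α 𝕜 : Type*} [Fintype ι] [DecidableEq ι] [RCLike 𝕜] [MeasurableSpace α]

/-- Andréief's identity. -/
theorem integral_det_mul_det (μ : Measure α) [SigmaFinite μ] (f g : ι → α → 𝕜)
    (hfg : ∀ k l, Integrable (fun x => f k x * g l x) μ) :
    ∫ x : ι → α, (of fun i j => f j (x i)).det * (of fun i j => g j (x i)).det
        ∂(Measure.pi fun _ => μ) =
      (Fintype.card ι)! * (of fun k l => ∫ x, f k x * g l x ∂μ).det := by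
  have leibniz (h : ι → α → 𝕜) (x : ι → α) :
      (of fun i j => h j (x i)).det = ∑ σ : Perm ι, (Perm.sign σ : ℤ) * ∏ i, h (σ i) (x i) := by
    rw [← det_transpose, det_apply']
    rfl
  have expand (x : ι → α) :
      (of fun i j => f j (x i)).det * (of fun i j => g j (x i)).det =
        ∑ σ : Perm ι, ∑ τ : Perm ι, ((Perm.sign σ : ℤ) : 𝕜) * (Perm.sign τ : ℤ) *
          ∏ i, (f (σ i) (x i) * g (τ i) (x i)) := by
    simp_rw [leibniz, Finset.sum_mul_sum, Finset.prod_mul_distrib]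
    exact Finset.sum_congr rfl fun _ _ => Finset.sum_congr rfl fun _ _ => by ring
  have term (σ τ : Perm ι) :
      Integrable (fun x : ι → α => ((Perm.sign σ : ℤ) : 𝕜) * (Perm.sign τ : ℤ) *
        ∏ i, (f (σ i) (x i) * g (τ i) (x i))) (Measure.pi fun _ => μ) :=
    (Integrable.fintype_prod fun i => hfg (σ i) (τ i)).const_mul _
  simp_rw [expand]
  rw [integral_finsetSum _ fun σ _ => integrable_finsetSum _ fun τ _ => term σ τ,
    ← sum_perm_sum_perm_sign_mul_sign_mul_prod]
  refine Finset.sum_congr rfl fun σ _ => ?_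
  rw [integral_finsetSum _ fun τ _ => term σ τ]
  refine Finset.sum_congr rfl fun τ _ => ?_
  rw [integral_const_mul, integral_fintype_prod_eq_prod (fun i y => f (σ i) y * g (τ i) y)]
  rfl

end Andreief

theorem ofReal_vdm2 {N : ℕ} (θ : Fin N → ℝ) :
    (vdm2 θ : ℂ) = (of fun i j : Fin N => cexp (-((j : ℕ) : ℂ) * θ i * I)).det *
      (of fun i j : Fin N => cexp (((j : ℕ) : ℂ) * θ i * I)).det := by
  set z : Fin N → ℂ := fun i => cexp (θ i * I)
  have hV : (of fun i j : Fin N => cexp (((j : ℕ) : ℂ) * θ i * I)) = vandermonde z := by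
    ext i j
    simp [z, vandermonde, ← Complex.exp_nat_mul, mul_assoc]
  have hconjV : (of fun i j : Fin N => cexp (-((j : ℕ) : ℂ) * θ i * I)) =
      (starRingEnd ℂ).mapMatrix (vandermonde z) := by
    ext i j
    simp only [z, neg_mul, of_apply, vandermonde, ← Complex.exp_nat_mul, RingHom.mapMatrix_apply,
      map_apply, ← Complex.exp_conj, map_mul, map_natCast, Complex.conj_ofReal, Complex.conj_I,
      mul_neg]
    ring_nf
  rw [hV, hconjV, ← RingHom.map_det, det_vandermonde, map_prod, vdm2, Complex.ofReal_prod,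
    ← Finset.prod_mul_distrib]
  refine Finset.prod_congr rfl fun i _ => ?_
  rw [map_prod, Complex.ofReal_prod, ← Finset.prod_mul_distrib]
  refine Finset.prod_congr rfl fun j _ => ?_
  rw [Complex.conj_mul', norm_sub_rev]
  push_cast
  rfl

theorem cexp_mul_I_sub_cexp_neg_mul_I (x : ℂ) :
    cexp (x * I) - cexp (-x * I) = 2 * I * Complex.sin x := by
  rw [mul_comm 2 I, mul_assoc, Complex.two_sin]
  ring_nf
  rw [Complex.I_sq]
  ring

theorem integral_closedBall_cexp_mul_I (a c h : ℝ) (ha : a ≠ 0) (hh : 0 ≤ h) :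
    ∫ x in closedBall c h, cexp (a * x * I) =
      cexp (a * c * I) * (2 * Real.sin (a * h) / a : ℝ) := by
  have haI : (a : ℂ) * I ≠ 0 := mul_ne_zero (by exact_mod_cast ha) Complex.I_ne_zero
  rw [Real.closedBall_eq_Icc, integral_Icc_eq_integral_Ioc,
    ← intervalIntegral.integral_of_le (by linarith),
    intervalIntegral.integral_congr (g := fun x : ℝ => cexp (a * I * x)) fun x _ => by ring_nf,
    integral_exp_mul_complex haI]
  calc (cexp (a * I * (c + h : ℝ)) - cexp (a * I * (c - h : ℝ))) / (a * I)
      = cexp (a * c * I) * (cexp ((a * h : ℝ) * I) - cexp (-(a * h : ℝ) * I)) / (a * I) := by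
        rw [mul_sub, ← Complex.exp_add, ← Complex.exp_add]
        push_cast
        ring_nf
    _ = cexp (a * c * I) * (2 * Real.sin (a * h) / a : ℝ) := by
        rw [cexp_mul_I_sub_cexp_neg_mul_I]
        push_cast
        field_simp

/-- The Dirichlet kernel, multiplied out so that the identity holds for every `x`. -/
theorem sum_cexp_mul_sin (x : ℂ) (R : ℕ) :
    (∑ m ∈ Finset.Icc (-(R : ℤ)) R, cexp (2 * m * x * I)) * Complex.sin x =
      Complex.sin ((2 * R + 1) * x) := by
  -- `2i sin x · e^{2imx} = e^{i(2m+1)x} - e^{i(2m-1)x}`, so the sum telescopes.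
  set F : ℕ → ℂ := fun k => cexp ((2 * k - 2 * R - 1) * x * I)
  have step (k : ℕ) : cexp (2 * ((-(R : ℤ) + k : ℤ) : ℂ) * x * I) * Complex.sin x =
      (F (k + 1) - F k) / (2 * I) := by
    have : F (k + 1) - F k = cexp (2 * ((-(R : ℤ) + k : ℤ) : ℂ) * x * I) *
        (cexp (x * I) - cexp (-x * I)) := by
      rw [mul_sub, ← Complex.exp_add, ← Complex.exp_add]
      simp only [F]
      push_cast
      ring_nf
    rw [this, cexp_mul_I_sub_cexp_neg_mul_I]
    field_simp
  rw [Int.Icc_eq_finset_map, Finset.sum_map,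
    show ((R : ℤ) + 1 - -(R : ℤ)).toNat = 2 * R + 1 by omega]
  simp only [Function.Embedding.trans_apply, Nat.castEmbedding_apply, addLeftEmbedding_apply,
    Finset.sum_mul, step]
  rw [← Finset.sum_div, Finset.sum_range_sub F]
  have : F (2 * R + 1) - F 0 = cexp (((2 * R + 1) * x) * I) - cexp (-((2 * R + 1) * x) * I) := by
    simp only [F]
    push_cast
    ring_nf
  rw [this, cexp_mul_I_sub_cexp_neg_mul_I]
  field_simp

theorem mem_closedBall_div_iff {t : ℝ} (ht : 0 < t) (c r θ : ℝ) :
    θ ∈ closedBall (c / t) (r / t) ↔ |t * θ - c| ≤ r := by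
  have : |θ - c / t| * t = |t * θ - c| := by
    rw [← abs_of_pos ht, ← abs_mul, abs_of_pos ht, sub_mul, div_mul_cancel₀ c ht.ne', mul_comm]
  rw [mem_closedBall, Real.dist_eq, le_div_iff₀ ht, this]

/-- For `t ∈ [2R+ε, 2R+2-ε]` this is `Ĩ(t)` up to the endpoints `±π`: exactly the arcs
`|tθ - 2πm| ≤ πε` with `|m| ≤ R` meet `[-π, π]`. -/
noncomputable def arcUnion (ε t : ℝ) (R : ℕ) : Set ℝ :=
  ⋃ m ∈ Finset.Icc (-(R : ℤ)) R, closedBall (2 * π * m / t) (π * ε / t)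

section arcUnion

variable {ε t : ℝ} {R : ℕ}

theorem isCompact_arcUnion : IsCompact (arcUnion ε t R) :=
  (Finset.Icc _ _).isCompact_biUnion fun _ _ => isCompact_closedBall _ _

theorem arcUnion_subset_Itil (hε : 0 < ε) (ht : 2 * R + ε ≤ t) : arcUnion ε t R ⊆ Itil ε t := by
  have ht0 : 0 < t := by linarith [R.cast_nonneg (α := ℝ)]
  intro θ hθ
  obtain ⟨m, hmR, hθm⟩ := Set.mem_iUnion₂.1 hθ
  rw [mem_closedBall_div_iff ht0] at hθm
  refine ⟨?_, m, hθm⟩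
  have hm : |(m : ℝ)| ≤ R := by
    rw [← Int.cast_abs]
    exact_mod_cast abs_le.2 (Finset.mem_Icc.1 hmR)
  have : t * |θ| ≤ π * t := by
    calc t * |θ| = |t * θ| := by rw [abs_mul, abs_of_pos ht0]
      _ ≤ |t * θ - 2 * π * m| + 2 * π * |(m : ℝ)| := by
        have := abs_add_le (t * θ - 2 * π * m) (2 * π * m)
        rw [abs_mul, abs_of_pos (by positivity : (0:ℝ) < 2 * π)] at this
        simpa using this
      _ ≤ π * ε + 2 * π * R := by gcongr
      _ ≤ π * t := by nlinarith [pi_pos]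
  exact abs_le.1 (le_of_mul_le_mul_left (by linarith) ht0)

theorem Itil_diff_arcUnion_subset (ht0 : 0 < t) (ht : t ≤ 2 * ((R : ℝ) + 1) - ε) :
    Itil ε t \ arcUnion ε t R ⊆ {-π, π} := by
  rintro θ ⟨⟨hθπ, m, hθm⟩, hθU⟩
  have hmR : (R : ℤ) < |m| := by
    by_contra! hm
    exact hθU <| Set.mem_iUnion₂.2
      ⟨m, Finset.mem_Icc.2 (abs_le.1 hm), (mem_closedBall_div_iff ht0 _ _ _).2 hθm⟩
  have hm' : (R : ℝ) + 1 ≤ |(m : ℝ)| := by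
    rw [← Int.cast_abs]
    exact_mod_cast hmR
  have : π * t ≤ t * |θ| := by
    calc π * t ≤ 2 * π * |(m : ℝ)| - π * ε := by nlinarith [pi_pos]
      _ ≤ |t * θ| := by
        have := abs_sub_abs_le_abs_sub (2 * π * m) (t * θ)
        rw [abs_mul, abs_of_pos (by positivity : (0:ℝ) < 2 * π), abs_sub_comm] at this
        linarith
      _ = t * |θ| := by rw [abs_mul, abs_of_pos ht0]
  have hπθ : π ≤ |θ| := le_of_mul_le_mul_left (by linarith) ht0
  rcases le_abs'.1 hπθ with h | h
  · exact Or.inl (le_antisymm h hθπ.1)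
  · exact Or.inr (le_antisymm hθπ.2 h)

theorem Itil_ae_eq_arcUnion (hε : 0 < ε)
    (ht : t ∈ Set.Icc (2 * (R : ℝ) + ε) (2 * ((R : ℝ) + 1) - ε)) :
    Itil ε t =ᵐ[volume] arcUnion ε t R := by
  have ht0 : 0 < t := by linarith [ht.1, R.cast_nonneg (α := ℝ)]
  refine ae_eq_set.2 ⟨measure_mono_null (Itil_diff_arcUnion_subset ht0 ht.2) ?_, ?_⟩
  · exact (Set.toFinite _).measure_zero _
  · rw [Set.sdiff_eq_empty.2 (arcUnion_subset_Itil hε ht.1), measure_empty]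

open Function in
theorem pairwise_disjoint_arcs (ht : 0 < t) (hε : ε < 1) :
    Pairwise (Disjoint on fun m : ℤ => closedBall (2 * π * m / t) (π * ε / t)) := by
  intro m n hmn
  apply closedBall_disjoint_closedBall
  have hmn' : (1 : ℝ) ≤ |(m : ℝ) - n| := by
    rw [← Int.cast_sub, ← Int.cast_abs]
    exact_mod_cast Int.one_le_abs (sub_ne_zero.2 hmn)
  rw [Real.dist_eq, ← sub_div, ← mul_sub, abs_div, abs_mul, abs_of_pos ht,
    abs_of_pos (by positivity : (0 : ℝ) < 2 * π), ← add_div]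
  gcongr
  nlinarith [pi_pos]

theorem integral_arcUnion_eq_sum (ht : 0 < t) (hε : ε < 1) {F : ℝ → ℂ} (hF : Continuous F) :
    ∫ x in arcUnion ε t R, F x =
      ∑ m ∈ Finset.Icc (-(R : ℤ)) R, ∫ x in closedBall (2 * π * m / t) (π * ε / t), F x :=
  integral_biUnion_finset _ (fun _ _ => measurableSet_closedBall)
    ((pairwise_disjoint_arcs ht hε).set_pairwise _)
    fun _ _ => hF.continuousOn.integrableOn_compact (isCompact_closedBall _ _)

theorem integral_arcUnion_one (ht : 0 < t) (hε0 : 0 ≤ ε) (hε1 : ε < 1) :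
    ∫ _ in arcUnion ε t R, (1 : ℂ) = ((2 * R + 1) * (2 * (π * ε / t)) : ℝ) := by
  rw [integral_arcUnion_eq_sum ht hε1 continuous_const]
  have hr : 0 ≤ π * ε / t := by positivity
  simp only [setIntegral_const, volume_real_closedBall hr, Finset.sum_const, Int.card_Icc,
    Complex.real_smul, mul_one, nsmul_eq_mul]
  rw [show ((R : ℤ) + 1 - -(R : ℤ)).toNat = 2 * R + 1 by omega]
  push_cast
  ring

theorem integral_arcUnion_cexp_mul_I (ht : 0 < t) (hε0 : 0 ≤ ε) (hε1 : ε < 1) {a : ℝ}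
    (ha : a ≠ 0) (hs : Real.sin (a * π / t) ≠ 0) :
    ∫ x in arcUnion ε t R, cexp (a * x * I) =
      (Real.sin ((2 * R + 1) * (a * π / t)) / Real.sin (a * π / t) *
        (2 * Real.sin (a * (π * ε / t)) / a) : ℝ) := by
  have hr : 0 ≤ π * ε / t := by positivity
  rw [integral_arcUnion_eq_sum ht hε1 (by fun_prop)]
  simp_rw [integral_closedBall_cexp_mul_I _ _ _ ha hr]
  rw [← Finset.sum_mul]
  have hD := sum_cexp_mul_sin (a * π / t : ℝ) R
  rw [← Complex.ofReal_sin, ← eq_div_iff (by exact_mod_cast hs)] at hD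
  push_cast at hD ⊢
  rw [← hD]
  congr 1
  exact Finset.sum_congr rfl fun m _ => by ring_nf

end arcUnion

theorem sin_sub_mul_pi_div_ne_zero {N : ℕ} {t : ℝ}
    (hnres : ∀ m : ℕ, 1 ≤ m → m ≤ N - 1 → ∀ p : ℤ, (m : ℝ) / t ≠ (p : ℝ)) {k l : Fin N}
    (hkl : k ≠ l) : Real.sin (((l : ℝ) - k) * π / t) ≠ 0 := by
  intro h
  obtain ⟨p, hp⟩ := Real.sin_eq_zero_iff.1 h
  have hq : ((l : ℝ) - k) / t = p := by
    rw [mul_div_right_comm] at hp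
    exact (mul_right_cancel₀ pi_ne_zero hp).symm
  have hkl' : (k : ℕ) ≠ l := Fin.val_ne_of_ne hkl
  rcases Nat.lt_or_gt_of_ne hkl' with hlt | hgt
  · refine hnres (l - k) (by omega) (by omega) p ?_
    rw [Nat.cast_sub hlt.le, ← hq]
  · refine hnres (k - l) (by omega) (by omega) (-p) ?_
    rw [Nat.cast_sub hgt.le, Int.cast_neg, ← hq]
    ring

noncomputable def kernelMatrix (ε t : ℝ) (R N : ℕ) : Matrix (Fin N) (Fin N) ℝ :=
  Matrix.of fun i j : Fin N =>
      if i = j then (2 * (R : ℝ) + 1) * ε / t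
      else Real.sin (((j.val : ℝ) - (i.val : ℝ)) * (2 * (R : ℝ) + 1) * π / t) *
             Real.sin (((j.val : ℝ) - (i.val : ℝ)) * π * ε / t) /
           (π * ((j.val : ℝ) - (i.val : ℝ)) *
             Real.sin (((j.val : ℝ) - (i.val : ℝ)) * π / t))

section kernelMatrix

variable {ε t : ℝ} {R N : ℕ}

theorem integral_arcUnion_cexp_mul_cexp (ht : 0 < t) (hε0 : 0 ≤ ε) (hε1 : ε < 1)
    (hnres : ∀ m : ℕ, 1 ≤ m → m ≤ N - 1 → ∀ p : ℤ, (m : ℝ) / t ≠ (p : ℝ)) (k l : Fin N) :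
    ∫ x in arcUnion ε t R, cexp (-((k : ℕ) : ℂ) * x * I) * cexp (((l : ℕ) : ℂ) * x * I) =
      (2 * π * kernelMatrix ε t R N k l : ℝ) := by
  have hexp (x : ℝ) : cexp (-((k : ℕ) : ℂ) * x * I) * cexp (((l : ℕ) : ℂ) * x * I) =
      cexp ((((l : ℝ) - k : ℝ) : ℂ) * x * I) := by
    rw [← Complex.exp_add]
    push_cast
    ring_nf
  simp_rw [hexp]
  by_cases hkl : k = l
  · subst hkl
    simp only [sub_self, Complex.ofReal_zero, zero_mul, Complex.exp_zero,
      integral_arcUnion_one ht hε0 hε1, kernelMatrix, of_apply, if_true]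
    congr 1
    ring
  · have ha : (l : ℝ) - k ≠ 0 := sub_ne_zero.2 (by exact_mod_cast Fin.val_ne_of_ne (Ne.symm hkl))
    have hs := sin_sub_mul_pi_div_ne_zero hnres hkl
    rw [integral_arcUnion_cexp_mul_I ht hε0 hε1 ha hs]
    simp only [kernelMatrix, of_apply, if_neg hkl]
    congr 1
    field_simp

theorem integral_pi_Itil_vdm2 (hε : ε ∈ Set.Ioo 0 1)
    (ht : t ∈ Set.Icc (2 * (R : ℝ) + ε) (2 * ((R : ℝ) + 1) - ε))
    (hnres : ∀ m : ℕ, 1 ≤ m → m ≤ N - 1 → ∀ p : ℤ, (m : ℝ) / t ≠ (p : ℝ)) :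
    ∫ θ in Set.univ.pi (fun _ : Fin N => Itil ε t), vdm2 θ =
      N ! * ((2 * π) ^ N * (kernelMatrix ε t R N).det) := by
  have ht0 : 0 < t := by linarith [ht.1, hε.1, R.cast_nonneg (α := ℝ)]
  have hμ : volume.restrict (Set.univ.pi fun _ : Fin N => Itil ε t) =
      Measure.pi fun _ => volume.restrict (arcUnion ε t R) := by
    rw [volume_pi, Measure.restrict_pi_pi,
      Measure.restrict_congr_set (Itil_ae_eq_arcUnion hε.1 ht)]
  have hA : (of fun k l : Fin N => ∫ x in arcUnion ε t R,
      cexp (-((k : ℕ) : ℂ) * x * I) * cexp (((l : ℕ) : ℂ) * x * I)) =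
      Complex.ofRealHom.mapMatrix ((2 * π) • kernelMatrix ε t R N) := by
    ext k l
    rw [of_apply, integral_arcUnion_cexp_mul_cexp ht0 hε.1.le hε.2 hnres]
    rfl
  have hint (k l : Fin N) : Integrable (fun x : ℝ => cexp (-((k : ℕ) : ℂ) * x * I) *
      cexp (((l : ℕ) : ℂ) * x * I)) (volume.restrict (arcUnion ε t R)) :=
    (by fun_prop : Continuous _).continuousOn.integrableOn_compact isCompact_arcUnion
  apply Complex.ofReal_injective
  rw [hμ, ← integral_complex_ofReal]
  simp_rw [ofReal_vdm2]
  rw [integral_det_mul_det _ _ _ hint, hA, ← RingHom.map_det, det_smul]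
  simp

end kernelMatrix

theorem stmt5_general (ε : ℝ) (hε : ε ∈ Set.Ioo (0 : ℝ) 1) (N : ℕ) (R : ℕ) (t : ℝ)
    (ht : t ∈ Set.Icc (2 * (R : ℝ) + ε) (2 * ((R : ℝ) + 1) - ε))
    (hnres : ∀ m : ℕ, 1 ≤ m → m ≤ N - 1 → ∀ p : ℤ, (m : ℝ) / t ≠ (p : ℝ)) :
    Pstrong ε N t = Matrix.det (Matrix.of fun i j : Fin N =>
      if i = j then (2 * (R : ℝ) + 1) * ε / t
      else Real.sin (((j.val : ℝ) - (i.val : ℝ)) * (2 * (R : ℝ) + 1) * π / t) *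
             Real.sin (((j.val : ℝ) - (i.val : ℝ)) * π * ε / t) /
           (π * ((j.val : ℝ) - (i.val : ℝ)) *
             Real.sin (((j.val : ℝ) - (i.val : ℝ)) * π / t))) := by
  change _ = (kernelMatrix ε t R N).det
  rw [Pstrong, integral_pi_Itil_vdm2 hε ht hnres]
  have : (2 * π) ^ N * (N ! : ℝ) ≠ 0 := by positivity
  field_simp

/-- For `ε ∈ (0,1)`, `N ≥ 1`, `R ∈ ℕ`, `t ∈ [2R+ε, 2(R+1)−ε]`, and assuming
`m/t ∉ ℤ` for all integers `1 ≤ m ≤ N−1`, one has `P_N(t) = det M` where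
`M_{i,i} = (2R+1)ε/t` and, for `i ≠ j`,
`M_{i,j} = sin((j−i)(2R+1)π/t) sin((j−i)πε/t) / (π(j−i) sin((j−i)π/t))`. -/
theorem stmt5 (ε : ℝ) (hε : ε ∈ Set.Ioo (0 : ℝ) 1) (N : ℕ) (hN : 1 ≤ N) (R : ℕ) (t : ℝ)
    (ht : t ∈ Set.Icc (2 * (R : ℝ) + ε) (2 * ((R : ℝ) + 1) - ε))
    (hnres : ∀ m : ℕ, 1 ≤ m → m ≤ N - 1 → ∀ p : ℤ, (m : ℝ) / t ≠ (p : ℝ)) :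
    Pstrong ε N t = Matrix.det (Matrix.of fun i j : Fin N =>
      if i = j then (2 * (R : ℝ) + 1) * ε / t
      else Real.sin (((j.val : ℝ) - (i.val : ℝ)) * (2 * (R : ℝ) + 1) * π / t) *
             Real.sin (((j.val : ℝ) - (i.val : ℝ)) * π * ε / t) /
           (π * ((j.val : ℝ) - (i.val : ℝ)) *
             Real.sin (((j.val : ℝ) - (i.val : ℝ)) * π / t))) :=
  stmt5_general ε hε N R t ht hnres
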